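/- Let α be a real number with 0 ≤ α < 2/3, let s ≥ 1 be an integer and set n = ⌊5s/3⌋ + 1. If n ≥ 25, then λ_α(K_s ∨ (⌊2s/3⌋+1)K_1) < n − 2. -/

import Mathlib

open SimpleGraph

/-- The `Aα`-matrix of a finite simple graph: `Aα(G) = α·D(G) + (1-α)·A(G)`. -/
noncomputable def aAlphaMatrix {V : Type*} [Finite V] (α : ℝ) (G : SimpleGraph V) :
    Matrix V V ℝ :=
  letI := Fintype.ofFinite V
  letI := Classical.decEq V
  letI : DecidableRel G.Adj := Classical.decRel _
  α • Matrix.diagonal (fun v => (G.degree v : ℝ)) + (1 - α) • (G.adjMatrix ℝ)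

/-- The `Aα`-spectral radius: the largest eigenvalue of `Aα(G)` (the supremum of its real
spectrum; all eigenvalues of this symmetric matrix are real). -/
noncomputable def lambdaAlpha {V : Type*} [Finite V] (α : ℝ) (G : SimpleGraph V) : ℝ :=
  letI := Fintype.ofFinite V
  letI := Classical.decEq V
  sSup (spectrum ℝ (aAlphaMatrix α G))

/-- The join `G ∨ H` of two graphs on disjoint vertex sets. -/
def graphJoin {V W : Type*} (G : SimpleGraph V) (H : SimpleGraph W) : SimpleGraph (V ⊕ W) where
  Adj x y :=
    match x, y with
    | Sum.inl a, Sum.inl b => G.Adj a b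
    | Sum.inr a, Sum.inr b => H.Adj a b
    | Sum.inl _, Sum.inr _ => True
    | Sum.inr _, Sum.inl _ => True
  symm := by
    constructor
    rintro (a | a) (b | b) h
    · exact G.adj_symm h
    · trivial
    · trivial
    · exact H.adj_symm h
  loopless := by
    constructor
    rintro (a | a) h
    · exact G.irrefl h
    · exact H.irrefl h

/-- `G` has an `H`-factor where `H` consists of the paths `P_k` for `k ∈ ks`: a spanning
subgraph all of whose connected components are paths `P_k` with `k ∈ ks`. -/
def HasPathFactor {V : Type*} (G : SimpleGraph V) (ks : Set ℕ) : Prop :=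
  ∃ F : SimpleGraph V, F ≤ G ∧
    ∀ c : F.ConnectedComponent, ∃ k ∈ ks, Nonempty ((F.induce c.supp) ≃g pathGraph k)

/-- `K_1 ∨ (K_{n-2} ∪ K_1)`. -/
def specialGraph (n : ℕ) : SimpleGraph (Fin 1 ⊕ (Fin (n - 2) ⊕ Fin 1)) :=
  graphJoin (⊤ : SimpleGraph (Fin 1))
    ((⊤ : SimpleGraph (Fin (n - 2))) ⊕g (⊤ : SimpleGraph (Fin 1)))

/-!
The matrix `A_α(G)` is entrywise nonnegative for `0 ≤ α ≤ 1`, so a Collatz–Wielandt argument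
applies: if some positive vector `w` satisfies `A w < c w` entrywise, then every real eigenvalue
is `< c` (compare an eigenvector with `w` at the coordinate where `|v i| / w i` is maximal).
For `K_s ∨ tK_1` take `w` equal to `u` on the clique and `1` on the independent set; the two
row conditions are those of the `2 × 2` quotient matrix, and with `c = s + t - 2` a suitable
`u > 0` exists as soon as `(1-α)² s t < ((1-α) t - 1)(s + t - 2 - α s)`. This is equivalent to
`(1-α)(t² - 2t - s) > t - 2`, which holds because `1 - α > 1/3`, `3t ≥ 2s + 1` and `t ≥ 6`.
-/

namespace Matrix

theorem lt_of_mem_spectrum_of_mulVec_lt {V : Type*} [Fintype V] [DecidableEq V]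
    {A : Matrix V V ℝ} (hA : ∀ i j, 0 ≤ A i j) {w : V → ℝ} (hw : ∀ i, 0 < w i) {c : ℝ}
    (hAw : ∀ i, (A *ᵥ w) i < c * w i) {μ : ℝ} (hμ : μ ∈ spectrum ℝ A) : μ < c := by
  rw [← spectrum_toLin', ← Module.End.hasEigenvalue_iff_mem_spectrum] at hμ
  obtain ⟨v, hv⟩ := hμ.exists_hasEigenvector
  have hAv : A *ᵥ v = μ • v := by simpa using hv.apply_eq_smul
  obtain ⟨k, hk⟩ := Function.ne_iff.mp hv.2
  obtain ⟨i, -, hi⟩ := Finset.exists_max_image Finset.univ (fun j => |v j| / w j)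
    ⟨k, Finset.mem_univ k⟩
  set r := |v i| / w i
  have hr : 0 < r := (div_pos (abs_pos.mpr hk) (hw k)).trans_le (hi k (Finset.mem_univ k))
  have hvr (j : V) : |v j| ≤ r * w j := (div_le_iff₀ (hw j)).mp (hi j (Finset.mem_univ j))
  have hvi : |v i| = r * w i := (div_mul_cancel₀ _ (hw i).ne').symm
  have hri : 0 < r * w i := mul_pos hr (hw i)
  have key : μ * (r * w i) < c * (r * w i) :=
    calc μ * (r * w i)
    _ ≤ |μ * v i| := by
      rw [abs_mul, hvi]; exact mul_le_mul_of_nonneg_right (le_abs_self μ) hri.le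
    _ = |∑ j, A i j * v j| := by rw [← smul_eq_mul, ← Pi.smul_apply, ← hAv]; rfl
    _ ≤ ∑ j, A i j * (r * w j) := by
      refine (Finset.abs_sum_le_sum_abs _ _).trans (Finset.sum_le_sum fun j _ => ?_)
      rw [abs_mul, abs_of_nonneg (hA i j)]
      exact mul_le_mul_of_nonneg_left (hvr j) (hA i j)
    _ = r * (A *ᵥ w) i := by
      simp only [mulVec, dotProduct, Finset.mul_sum]
      exact Finset.sum_congr rfl fun j _ => by ring
    _ < r * (c * w i) := mul_lt_mul_of_pos_left (hAw i) hr
    _ = c * (r * w i) := by ring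
  exact lt_of_mul_lt_mul_right key hri.le

theorem sSup_spectrum_lt_of_mulVec_lt {V : Type*} [Fintype V] [DecidableEq V]
    {A : Matrix V V ℝ} (hA : ∀ i j, 0 ≤ A i j) {w : V → ℝ} (hw : ∀ i, 0 < w i) {c : ℝ}
    (hc : 0 < c) (hAw : ∀ i, (A *ᵥ w) i < c * w i) : sSup (spectrum ℝ A) < c := by
  rcases (spectrum ℝ A).eq_empty_or_nonempty with h | h
  · rwa [h, Real.sSup_empty]
  · exact A.lt_of_mem_spectrum_of_mulVec_lt hA hw hAw (h.csSup_mem A.finite_spectrum)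

end Matrix

section AAlpha

open Matrix

variable {V : Type*} [Fintype V] [DecidableEq V] (G : SimpleGraph V) [DecidableRel G.Adj]

theorem aAlphaMatrix_apply (α : ℝ) (i j : V) :
    aAlphaMatrix α G i j =
      (if i = j then α * G.degree i else 0) + (if G.Adj i j then 1 - α else 0) := by
  unfold aAlphaMatrix
  simp only [Matrix.add_apply, Matrix.smul_apply, diagonal_apply, adjMatrix_apply,
    smul_eq_mul, mul_ite, mul_one, mul_zero]
  congr!

theorem aAlphaMatrix_mulVec_apply (α : ℝ) (w : V → ℝ) (i : V) :
    (aAlphaMatrix α G *ᵥ w) i =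
      α * G.degree i * w i + (1 - α) * ∑ j ∈ G.neighborFinset i, w j := by
  simp only [mulVec, dotProduct, aAlphaMatrix_apply, add_mul, ite_mul, zero_mul,
    Finset.sum_add_distrib, Finset.sum_ite_eq, Finset.mem_univ, if_true, neighborFinset_eq_filter,
    Finset.sum_filter, Finset.mul_sum, mul_ite, mul_zero]

theorem aAlphaMatrix_nonneg {α : ℝ} (hα0 : 0 ≤ α) (hα1 : α ≤ 1) (i j : V) :
    0 ≤ aAlphaMatrix α G i j := by
  rw [aAlphaMatrix_apply]
  have : 0 ≤ 1 - α := sub_nonneg.mpr hα1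
  positivity

theorem lambdaAlpha_lt_of_forall_lt {α : ℝ} (hα0 : 0 ≤ α) (hα1 : α ≤ 1) {w : V → ℝ}
    (hw : ∀ i, 0 < w i) {c : ℝ} (hc : 0 < c)
    (h : ∀ i, α * G.degree i * w i + (1 - α) * ∑ j ∈ G.neighborFinset i, w j < c * w i) :
    lambdaAlpha α G < c := by
  have := sSup_spectrum_lt_of_mulVec_lt (aAlphaMatrix_nonneg G hα0 hα1) hw hc
    fun i => (aAlphaMatrix_mulVec_apply G α w i).trans_lt (h i)
  unfold lambdaAlpha
  convert this

end AAlpha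

section Join

variable {V W : Type*} (G : SimpleGraph V) (H : SimpleGraph W)

@[simp] theorem graphJoin_adj_inl_inl (a b : V) :
    (graphJoin G H).Adj (Sum.inl a) (Sum.inl b) ↔ G.Adj a b := Iff.rfl

@[simp] theorem graphJoin_adj_inl_inr (a : V) (b : W) :
    (graphJoin G H).Adj (Sum.inl a) (Sum.inr b) := trivial

@[simp] theorem graphJoin_adj_inr_inl (a : W) (b : V) :
    (graphJoin G H).Adj (Sum.inr a) (Sum.inl b) := trivial

@[simp] theorem graphJoin_adj_inr_inr (a b : W) :
    (graphJoin G H).Adj (Sum.inr a) (Sum.inr b) ↔ H.Adj a b := Iff.rfl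

variable [Fintype V] [Fintype W] [DecidableRel (graphJoin G H).Adj]

theorem graphJoin_sum_neighborFinset_inl [DecidableRel G.Adj] {M : Type*} [AddCommMonoid M]
    (f : V ⊕ W → M) (a : V) : ∑ x ∈ (graphJoin G H).neighborFinset (Sum.inl a), f x =
      ∑ b ∈ G.neighborFinset a, f (Sum.inl b) + ∑ b, f (Sum.inr b) := by
  simp [neighborFinset_eq_filter, Finset.sum_filter, Fintype.sum_sum_type]

theorem graphJoin_sum_neighborFinset_inr [DecidableRel H.Adj] {M : Type*} [AddCommMonoid M]
    (f : V ⊕ W → M) (a : W) : ∑ x ∈ (graphJoin G H).neighborFinset (Sum.inr a), f x =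
      ∑ b, f (Sum.inl b) + ∑ b ∈ H.neighborFinset a, f (Sum.inr b) := by
  simp [neighborFinset_eq_filter, Finset.sum_filter, Fintype.sum_sum_type]

theorem graphJoin_degree_inl [DecidableRel G.Adj] (a : V) :
    (graphJoin G H).degree (Sum.inl a) = G.degree a + Fintype.card W := by
  rw [← card_neighborFinset_eq_degree, Finset.card_eq_sum_ones,
    graphJoin_sum_neighborFinset_inl]
  simp

theorem graphJoin_degree_inr [DecidableRel H.Adj] (a : W) :
    (graphJoin G H).degree (Sum.inr a) = Fintype.card V + H.degree a := by
  rw [← card_neighborFinset_eq_degree, Finset.card_eq_sum_ones,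
    graphJoin_sum_neighborFinset_inr]
  simp

end Join

theorem lambdaAlpha_completeSplit_lt {s t : ℕ} {α u c : ℝ} (hα0 : 0 ≤ α) (hα1 : α ≤ 1)
    (hu : 0 < u) (hc : 0 < c)
    (h₁ : (α * (s - 1 + t) + (1 - α) * (s - 1)) * u + (1 - α) * t < c * u)
    (h₂ : (1 - α) * s * u + α * s < c) :
    lambdaAlpha α (graphJoin (⊤ : SimpleGraph (Fin s)) (⊥ : SimpleGraph (Fin t))) < c := by
  classical
  refine lambdaAlpha_lt_of_forall_lt _ hα0 hα1 (w := Sum.elim (fun _ => u) (fun _ => 1))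
    (by rintro (a | b) <;> simp [hu]) hc ?_
  rintro (a | b)
  · have hs : 1 ≤ s := Fin.pos a
    simp [graphJoin_degree_inl, graphJoin_sum_neighborFinset_inl, Finset.card_compl, hs]
    linarith
  · simp [graphJoin_degree_inr, graphJoin_sum_neighborFinset_inr]
    linarith

theorem exists_pos_mul_add_lt_of_mul_lt {a b c d e : ℝ} (hb : 0 ≤ b) (he : 0 < e) (ha : a < c)
    (h : b * e < (c - a) * (c - d)) : ∃ u > 0, a * u + b < c * u ∧ e * u + d < c := by
  have hca : 0 < c - a := sub_pos.mpr ha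
  -- any `u` strictly between `b / (c - a)` and `(c - d) / e` works
  have hlt : b / (c - a) < (c - d) / e := by rwa [div_lt_div_iff₀ hca he, mul_comm (c - d)]
  have : 0 ≤ b / (c - a) := by positivity
  refine ⟨(b / (c - a) + (c - d) / e) / 2, by linarith, ?_, ?_⟩
  · have : b / (c - a) < (b / (c - a) + (c - d) / e) / 2 := by linarith
    rw [div_lt_iff₀ hca] at this
    linarith
  · have : (b / (c - a) + (c - d) / e) / 2 < (c - d) / e := by linarith
    rw [lt_div_iff₀ he] at this
    linarith

theorem completeSplit_quotient_det_lt {α s t : ℝ} (hα : α < 2 / 3) (ht : 6 ≤ t)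
    (hst : 2 * s + 1 ≤ 3 * t) :
    (1 - α) * t * ((1 - α) * s) <
      (s + t - 2 - (α * (s - 1 + t) + (1 - α) * (s - 1))) * (s + t - 2 - α * s) := by
  have hpos : 0 < t ^ 2 - 2 * t - s := by nlinarith
  nlinarith [mul_pos (by linarith : (0 : ℝ) < 1 - α - 1 / 3) hpos,
    mul_nonneg (by linarith : (0 : ℝ) ≤ t - 6) (by linarith : (0 : ℝ) ≤ t - 1 / 2)]

theorem lambdaAlpha_split_lt_case3_general (α : ℝ) (hα0 : 0 ≤ α) (hα1 : α < 2 / 3)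
    (s : ℕ) (hn : 25 ≤ 5 * s / 3 + 1) :
    lambdaAlpha α (graphJoin (⊤ : SimpleGraph (Fin s))
        (⊥ : SimpleGraph (Fin (2 * s / 3 + 1)))) <
      ((5 * s / 3 + 1 : ℕ) : ℝ) - 2 := by
  set t := 2 * s / 3 + 1
  have hst : 5 * s / 3 + 1 = s + t := by omega
  have hs : (15 : ℝ) ≤ s := by exact_mod_cast (by omega : 15 ≤ s)
  have ht : (6 : ℝ) ≤ t := by exact_mod_cast (by omega : 6 ≤ t)
  have h3t : 2 * (s : ℝ) + 1 ≤ 3 * t := by exact_mod_cast (by omega : 2 * s + 1 ≤ 3 * t)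
  rw [hst, Nat.cast_add]
  obtain ⟨u, hu, h₁, h₂⟩ := exists_pos_mul_add_lt_of_mul_lt (by nlinarith) (by nlinarith)
    (by nlinarith) (completeSplit_quotient_det_lt hα1 ht h3t)
  exact lambdaAlpha_completeSplit_lt hα0 (by linarith) hu (by linarith) h₁ h₂

/-- For `0 ≤ α < 2/3` and an integer `s ≥ 1`, setting `n = ⌊5s/3⌋ + 1`, if `n ≥ 25` then
`λ_α(K_s ∨ (⌊2s/3⌋+1)K_1) < n − 2`. -/
theorem lambdaAlpha_split_lt_case3 (α : ℝ) (hα0 : 0 ≤ α) (hα1 : α < 2 / 3)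
    (s : ℕ) (hs : 1 ≤ s) (hn : 25 ≤ 5 * s / 3 + 1) :
    lambdaAlpha α (graphJoin (⊤ : SimpleGraph (Fin s))
        (⊥ : SimpleGraph (Fin (2 * s / 3 + 1)))) <
      ((5 * s / 3 + 1 : ℕ) : ℝ) - 2 :=
  lambdaAlpha_split_lt_case3_general α hα0 hα1 s hn
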